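/- Let F₁ and F₂ be C*-subalgebras of ℓ∞(X) containing the constant functions with F₁ ⊆ F₂, and let G : δ₂X → δ₁X be a continuous surjection with e₁ = G ∘ e₂. For p ∈ δ₂X and q ∈ δ₁X, the following statements are equivalent: (i) q ⊆ p; (ii) G(p) = q; (iii) f^{δ₂}(p) = f^{δ₁}(q) for every f ∈ F₁, where f^{δ₁} and f^{δ₂} denote the unique continuous extensions of f to δ₁X and δ₂X (i.e. the unique continuous functions with f = f^{δ₁} ∘ e₁ and f = f^{δ₂} ∘ e₂). -/

import Mathlib

open Set

variable {X : Type*} [Nonempty X] [TopologicalSpace X] [DiscreteTopology X]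

/-- The set `X(f,r) = {x ∈ X : |f(x)| ≤ r}`. -/
def XSet (f : BoundedContinuousFunction X ℂ) (r : ℝ) : Set X := {x | ‖f x‖ ≤ r}

/-- An `F`-family on `X`: a nonempty collection of nonempty subsets of `X` such that for every
member `A ≠ X` there are `B` in the collection and `f ∈ F` with `f(B) = {0}`,
`f(X \ A) = {1}`. -/
def FFamily (F : StarSubalgebra ℂ (BoundedContinuousFunction X ℂ)) (𝒜 : Set (Set X)) : Prop :=
  𝒜.Nonempty ∧ (∀ A ∈ 𝒜, A.Nonempty) ∧
    ∀ A ∈ 𝒜, A ≠ Set.univ →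
      ∃ B ∈ 𝒜, ∃ f ∈ F, (∀ x ∈ B, f x = 0) ∧ ∀ x ∉ A, f x = 1

/-- A filter on the set `X`, viewed as a collection of subsets. -/
def IsSetFilter (φ : Set (Set X)) : Prop :=
  φ.Nonempty ∧ (∀ A ∈ φ, ∀ B ∈ φ, A ∩ B ∈ φ) ∧
    (∀ A ∈ φ, ∀ B : Set X, A ⊆ B → B ∈ φ) ∧ ∅ ∉ φ

/-- An `F`-filter on `X` is a filter which is also an `F`-family. -/
def FFilter (F : StarSubalgebra ℂ (BoundedContinuousFunction X ℂ)) (φ : Set (Set X)) : Prop :=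
  IsSetFilter φ ∧ FFamily F φ

/-- An `F`-ultrafilter on `X` is an `F`-filter maximal with respect to inclusion. -/
def FUltrafilter (F : StarSubalgebra ℂ (BoundedContinuousFunction X ℂ)) (φ : Set (Set X)) : Prop :=
  FFilter F φ ∧ ∀ ψ : Set (Set X), FFilter F ψ → φ ⊆ ψ → ψ = φ

/-- `F₀ = {f ∈ F : X(f,r) ≠ ∅ for all r > 0}`. -/
def FZero (F : StarSubalgebra ℂ (BoundedContinuousFunction X ℂ)) :
    Set (BoundedContinuousFunction X ℂ) :=
  {f | f ∈ F ∧ ∀ r : ℝ, 0 < r → (XSet f r).Nonempty}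

/-- `Z(A) = {f ∈ F : f(x) = 0 for all x ∈ A}`. -/
def ZSet (F : StarSubalgebra ℂ (BoundedContinuousFunction X ℂ)) (A : Set X) :
    Set (BoundedContinuousFunction X ℂ) :=
  {f | f ∈ F ∧ ∀ x ∈ A, f x = 0}

/-- The finite intersection property. -/
def FIP (𝒜 : Set (Set X)) : Prop :=
  ∀ s : Finset (Set X), ↑s ⊆ 𝒜 → s.Nonempty → (⋂₀ (s : Set (Set X))).Nonempty

/-- A filter base on `X`. -/
def IsFilterBase (ℬ : Set (Set X)) : Prop :=
  ℬ.Nonempty ∧ ∅ ∉ ℬ ∧ ∀ A ∈ ℬ, ∀ B ∈ ℬ, ∃ C ∈ ℬ, C ⊆ A ∩ B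

/-- The filter generated by a filter base. -/
def genFilter (ℬ : Set (Set X)) : Set (Set X) :=
  {A | ∃ B ∈ ℬ, B ⊆ A}

/-- `δX`, the space of all `F`-ultrafilters on `X`. -/
def Delta (F : StarSubalgebra ℂ (BoundedContinuousFunction X ℂ)) : Type _ :=
  {p : Set (Set X) // FUltrafilter F p}

/-- `Â = {p ∈ δX : A ∈ p}`. -/
def hatSet (F : StarSubalgebra ℂ (BoundedContinuousFunction X ℂ)) (A : Set X) :
    Set (Delta F) :=
  {p | A ∈ p.1}

/-- The topology on `δX` having `{Â : A ⊆ X}` as a base. -/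
instance (F : StarSubalgebra ℂ (BoundedContinuousFunction X ℂ)) :
    TopologicalSpace (Delta F) :=
  TopologicalSpace.generateFrom {S | ∃ A : Set X, S = hatSet F A}

/-- For an `F`-filter `φ`, `φ̂ = {p ∈ δX : φ ⊆ p}`. -/
def hatF (F : StarSubalgebra ℂ (BoundedContinuousFunction X ℂ)) (φ : Set (Set X)) :
    Set (Delta F) :=
  {p | φ ⊆ p.1}

/-- `τ(F)`, the weakest topology on `X` making every member of `F` continuous. -/
noncomputable def tauF (F : StarSubalgebra ℂ (BoundedContinuousFunction X ℂ)) : TopologicalSpace X :=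
  ⨅ f ∈ (F : Set (BoundedContinuousFunction X ℂ)),
    TopologicalSpace.induced (fun x => f x) inferInstance

/-- `B(I) = {X(f,r) : f ∈ I, r > 0}` for an ideal `I` of `F`. -/
def BIdeal (F : StarSubalgebra ℂ (BoundedContinuousFunction X ℂ)) (I : Ideal F) :
    Set (Set X) :=
  {S | ∃ f ∈ I, ∃ r : ℝ, 0 < r ∧ S = XSet (f : BoundedContinuousFunction X ℂ) r}


/-!
An `F`-filter contains the `τ(F)`-interiors of its members, so the evaluation map has dense
range, and continuity of `G` together with `G ∘ e₂ = e₁` forces `G p ⊆ p`. Two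
`F₁`-ultrafilters contained in one filter coincide, since the filter generated by both is
again an `F₁`-filter; this gives (i) ⇔ (ii). As `F₁` is closed, every `f ∈ F₁` converges along
each `F₁`-ultrafilter: a cluster point can be adjoined to the ultrafilter because bump
functions of `f` lie in `F₁` (Weierstrass approximation). The limits form the continuous
extension `f^δ`. Then (ii) ⇒ (iii) is uniqueness of extensions off the dense image of `e₂`,
and (iii) ⇒ (ii) holds because the functions `f^δ` separate `F₁`-ultrafilters.
-/

open Filter Topology

section

omit [Nonempty X] [DiscreteTopology X]

variable {F : StarSubalgebra ℂ (BoundedContinuousFunction X ℂ)}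

namespace IsSetFilter

omit [TopologicalSpace X]

variable {φ : Set (Set X)}

def toFilter (hφ : IsSetFilter φ) : Filter X where
  sets := φ
  univ_sets := let ⟨A, hA⟩ := hφ.1; hφ.2.2.1 A hA _ (subset_univ A)
  sets_of_superset hA hAB := hφ.2.2.1 _ hA _ hAB
  inter_sets hA hB := hφ.2.1 _ hA _ hB

theorem nonempty_of_mem (hφ : IsSetFilter φ) {A : Set X} (hA : A ∈ φ) : A.Nonempty :=
  nonempty_iff_ne_empty.2 fun h => hφ.2.2.2 (h ▸ hA)

theorem neBot_toFilter (hφ : IsSetFilter φ) : hφ.toFilter.NeBot :=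
  forall_mem_nonempty_iff_neBot.1 fun _ => hφ.nonempty_of_mem

end IsSetFilter

/-- The separation clause of an `F`-family, for a filter and without the exception `A = X`. -/
def IsFRegular (F : StarSubalgebra ℂ (BoundedContinuousFunction X ℂ)) (l : Filter X) : Prop :=
  ∀ A ∈ l, ∃ B ∈ l, ∃ h ∈ F, (∀ x ∈ B, h x = 0) ∧ ∀ x ∉ A, h x = 1

theorem IsFRegular.inf {l₁ l₂ : Filter X} (h₁ : IsFRegular F l₁) (h₂ : IsFRegular F l₂) :
    IsFRegular F (l₁ ⊓ l₂) := by
  intro A hA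
  obtain ⟨A₁, hA₁, A₂, hA₂, hA⟩ := mem_inf_iff_superset.1 hA
  obtain ⟨B₁, hB₁, h₁, hh₁, h₁_zero, h₁_one⟩ := h₁ A₁ hA₁
  obtain ⟨B₂, hB₂, h₂, hh₂, h₂_zero, h₂_one⟩ := h₂ A₂ hA₂
  -- `1 - (h₁ + h₂ - h₁ h₂) = (1 - h₁) (1 - h₂)` vanishes off `A₁ ∩ A₂`
  refine ⟨B₁ ∩ B₂, inter_mem_inf hB₁ hB₂, h₁ + h₂ - h₁ * h₂,
    sub_mem (add_mem hh₁ hh₂) (mul_mem hh₁ hh₂), fun x hx => ?_, fun x hx => ?_⟩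
  · simp [h₁_zero x hx.1, h₂_zero x hx.2]
  · by_cases hx₁ : x ∈ A₁
    · simp [h₂_one x fun hx₂ => hx (hA ⟨hx₁, hx₂⟩)]
    · simp [h₁_one x hx₁]

theorem FFilter.isFRegular {p : Set (Set X)} (hp : FFilter F p) : IsFRegular F hp.1.toFilter := by
  intro A hA
  by_cases hA_univ : A = univ
  · exact ⟨A, hA, 0, zero_mem F, fun _ _ => rfl, fun x hx => (hx (hA_univ ▸ mem_univ x)).elim⟩
  · exact hp.2.2.2 A hA hA_univ

theorem fFilter_sets (l : Filter X) [l.NeBot] (hl : IsFRegular F l) : FFilter F l.sets :=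
  ⟨⟨⟨univ, univ_mem⟩, fun _ hA _ hB => inter_mem hA hB, fun _ hA _ hAB => mem_of_superset hA hAB,
    empty_notMem l⟩, ⟨univ, univ_mem⟩, fun _ hA => Filter.nonempty_of_mem hA,
    fun A hA _ => hl A hA⟩

theorem FUltrafilter.sets_eq_of_subset {p : Set (Set X)} (hp : FUltrafilter F p) {l : Filter X}
    [l.NeBot] (hl : IsFRegular F l) (hpl : p ⊆ l.sets) : l.sets = p :=
  hp.2 _ (fFilter_sets l hl) hpl

theorem FUltrafilter.eq_of_subset_isSetFilter {p q φ : Set (Set X)} (hp : FUltrafilter F p)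
    (hq : FUltrafilter F q) (hφ : IsSetFilter φ) (hpφ : p ⊆ φ) (hqφ : q ⊆ φ) : p = q := by
  let l := hp.1.1.toFilter ⊓ hq.1.1.toFilter
  have : l.NeBot := inf_neBot_iff.2 fun A hA B hB =>
    hφ.nonempty_of_mem (hφ.2.1 A (hpφ hA) B (hqφ hB))
  have hl : IsFRegular F l := hp.1.isFRegular.inf hq.1.isFRegular
  rw [← hp.sets_eq_of_subset hl fun A hA => mem_inf_of_left hA,
    hq.sets_eq_of_subset hl fun A hA => mem_inf_of_right hA]

theorem continuous_tauF {f : BoundedContinuousFunction X ℂ} (hf : f ∈ F) :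
    Continuous[tauF F, _] f :=
  continuous_iff_le_induced.2 (iInf₂_le f hf)

theorem FFilter.interior_mem {p : Set (Set X)} (hp : FFilter F p) {C : Set X} (hC : C ∈ p) :
    @interior X (tauF F) C ∈ p := by
  obtain ⟨B, hB, h, hh, h_zero, h_one⟩ := hp.isFRegular C hC
  refine hp.1.2.2.1 B hB _ fun x hx => ?_
  have hopen : IsOpen[tauF F] (h ⁻¹' Metric.ball 0 1) :=
    @Continuous.isOpen_preimage X ℂ (tauF F) _ _ (continuous_tauF hh) _ Metric.isOpen_ball
  refine @interior_maximal X (tauF F) _ _ (fun y hy => by_contra fun hyC => ?_) hopen x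
    (show h x ∈ Metric.ball 0 1 by simp [h_zero x hx])
  simp [h_one y hyC] at hy

theorem BoundedContinuousFunction.aeval_apply (u : BoundedContinuousFunction X ℂ)
    (Q : Polynomial ℂ) (x : X) : Polynomial.aeval u Q x = Q.eval (u x) :=
  (Polynomial.aeval_algHom_apply
    ((ContinuousMap.evalAlgHom ℂ ℂ x).comp (BoundedContinuousFunction.toContinuousMapₐ ℂ)) u Q).symm

theorem mem_of_apply_eq_comp (hF : IsClosed (F : Set (BoundedContinuousFunction X ℂ)))
    {u : BoundedContinuousFunction X ℂ} (hu : u ∈ F) {t : X → ℝ} (hut : ∀ x, u x = t x)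
    {ψ : ℝ → ℝ} (hψ : Continuous ψ) {h : BoundedContinuousFunction X ℂ}
    (hh : ∀ x, h x = ψ (t x)) : h ∈ F := by
  refine hF.closure_subset_iff.2 subset_rfl (Metric.mem_closure_iff.2 fun ε hε => ?_)
  obtain ⟨P, hP⟩ := exists_polynomial_near_of_continuousOn (-‖u‖) ‖u‖ ψ hψ.continuousOn
    (ε / 2) (half_pos hε)
  have ht : ∀ x, t x ∈ Icc (-‖u‖) ‖u‖ := fun x => by
    rw [mem_Icc, ← abs_le, ← Real.norm_eq_abs, ← Complex.norm_real, ← hut]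
    exact u.norm_coe_le_norm x
  have hPF : Polynomial.aeval u (P.map (algebraMap ℝ ℂ)) ∈ F :=
    Algebra.adjoin_le (Set.singleton_subset_iff.2 hu) (Polynomial.aeval_mem_adjoin_singleton ℂ u)
  refine ⟨_, hPF, lt_of_le_of_lt ((BoundedContinuousFunction.dist_le (half_pos hε).le).2
    fun x => ?_) (half_lt_self hε)⟩
  rw [BoundedContinuousFunction.aeval_apply, hh, hut, Polynomial.eval_map,
    ← Complex.coe_algebraMap, Polynomial.eval₂_at_apply, Complex.coe_algebraMap,
    dist_comm, Complex.dist_eq, ← Complex.ofReal_sub, Complex.norm_real, Real.norm_eq_abs]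
  exact (hP _ (ht x)).le

theorem exists_bump_mem (hF : IsClosed (F : Set (BoundedContinuousFunction X ℂ)))
    {f : BoundedContinuousFunction X ℂ} (hf : f ∈ F) (z : ℂ) {a b : ℝ} (ha : 0 < a)
    (hab : a < b) :
    ∃ h ∈ F, (∀ x, dist (f x) z ≤ a → h x = 0) ∧ ∀ x, b ≤ dist (f x) z → h x = 1 := by
  set ψ : ℝ → ℝ := fun s => min 1 (max 0 ((s - a ^ 2) / (b ^ 2 - a ^ 2)))
  have hψ : Continuous ψ := by fun_prop
  have hψ_norm (s : ℝ) : ‖(ψ s : ℂ)‖ ≤ 1 := by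
    rw [Complex.norm_real, Real.norm_eq_abs, abs_le]
    exact ⟨by linarith [le_min zero_le_one (le_max_left 0 ((s - a ^ 2) / (b ^ 2 - a ^ 2)))],
      min_le_left _ _⟩
  set t : X → ℝ := fun x => dist (f x) z ^ 2
  let h : BoundedContinuousFunction X ℂ := .ofNormedAddCommGroup (fun x => (ψ (t x) : ℂ))
    (by fun_prop) 1 fun x => hψ_norm (t x)
  -- the squares are there because `‖f - z‖ ^ 2 = star (f - z) * (f - z)` lies in `F`
  have hu : star (f - algebraMap ℂ _ z) * (f - algebraMap ℂ _ z) ∈ F :=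
    mul_mem (star_mem (sub_mem hf (F.algebraMap_mem z))) (sub_mem hf (F.algebraMap_mem z))
  refine ⟨h, mem_of_apply_eq_comp hF hu (fun x => ?_) hψ fun x => rfl, fun x hx => ?_,
    fun x hx => ?_⟩
  · simp [t, Complex.dist_eq, ← map_sub, Complex.conj_mul']
  · have : t x ≤ a ^ 2 := pow_le_pow_left₀ dist_nonneg hx 2
    have : (t x - a ^ 2) / (b ^ 2 - a ^ 2) ≤ 0 :=
      div_nonpos_of_nonpos_of_nonneg (by linarith) (by nlinarith)
    simp [h, ψ, max_eq_left this]
  · have : b ^ 2 ≤ t x := pow_le_pow_left₀ (by linarith) hx 2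
    have : 1 ≤ (t x - a ^ 2) / (b ^ 2 - a ^ 2) := by
      rw [le_div_iff₀ (by nlinarith)]; linarith
    simp [h, ψ, max_eq_right (zero_le_one.trans this), this]

theorem isFRegular_comap_nhds (hF : IsClosed (F : Set (BoundedContinuousFunction X ℂ)))
    {f : BoundedContinuousFunction X ℂ} (hf : f ∈ F) (z : ℂ) :
    IsFRegular F (comap f (𝓝 z)) := by
  intro A hA
  obtain ⟨δ, hδ, hδA⟩ := (Metric.nhds_basis_closedBall.comap f).mem_iff.1 hA
  obtain ⟨h, hh, h_zero, h_one⟩ :=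
    exists_bump_mem hF hf z (half_pos hδ) (half_lt_self hδ)
  exact ⟨f ⁻¹' Metric.closedBall z (δ / 2),
    preimage_mem_comap (Metric.closedBall_mem_nhds z (half_pos hδ)), h, hh,
    fun x hx => h_zero x hx, fun x hx => h_one x (not_le.1 fun hxδ => hx (hδA hxδ)).le⟩

theorem FUltrafilter.exists_tendsto (hF : IsClosed (F : Set (BoundedContinuousFunction X ℂ)))
    {p : Set (Set X)} (hp : FUltrafilter F p) {f : BoundedContinuousFunction X ℂ} (hf : f ∈ F) :
    ∃ z, Tendsto f hp.1.1.toFilter (𝓝 z) := by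
  -- a cluster point `z` exists by compactness; adjoining `f ⁻¹' 𝓝 z` to `p` keeps it an
  -- `F`-filter thanks to the bump functions, so by maximality `p` already contains `f ⁻¹' 𝓝 z`
  have := hp.1.1.neBot_toFilter
  have hbdd : map f hp.1.1.toFilter ≤ 𝓟 (Metric.closedBall 0 ‖f‖) :=
    le_principal_iff.2 (mem_map.2 (univ_mem' fun x => by simpa using f.norm_coe_le_norm x))
  obtain ⟨z, -, hz⟩ := (isCompact_closedBall (0 : ℂ) ‖f‖).exists_clusterPt hbdd
  let l := hp.1.1.toFilter ⊓ comap f (𝓝 z)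
  have : l.NeBot := by
    rw [← map_neBot_iff f, Filter.push_pull, inf_comm]
    exact hz
  have hl := hp.sets_eq_of_subset (hp.1.isFRegular.inf (isFRegular_comap_nhds hF hf z))
    fun A hA => mem_inf_of_left hA
  refine ⟨z, fun s hs => ?_⟩
  change f ⁻¹' s ∈ p
  rw [← hl]
  exact mem_inf_of_right (preimage_mem_comap hs)

def IsEvaluation (F : StarSubalgebra ℂ (BoundedContinuousFunction X ℂ)) (e : X → Delta F) :
    Prop :=
  ∀ x, (e x).1 = {A : Set X | A ∈ @nhds X (tauF F) x}

namespace Delta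

def filter (p : Delta F) : Filter X := p.2.1.1.toFilter

instance (p : Delta F) : p.filter.NeBot := p.2.1.1.neBot_toFilter

/-- The extension `f^δ`. Unless `f` converges along `p` (e.g. `f ∈ F` with `F` closed),
`limUnder` returns a junk value. -/
noncomputable def extend (f : BoundedContinuousFunction X ℂ) (p : Delta F) : ℂ :=
  limUnder p.filter f

theorem tendsto_extend (hF : IsClosed (F : Set (BoundedContinuousFunction X ℂ)))
    {f : BoundedContinuousFunction X ℂ} (hf : f ∈ F) (p : Delta F) :
    Tendsto f p.filter (𝓝 (extend f p)) :=
  tendsto_nhds_limUnder (p.2.exists_tendsto hF hf)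

theorem extend_eq_of_tendsto (hF : IsClosed (F : Set (BoundedContinuousFunction X ℂ)))
    {f : BoundedContinuousFunction X ℂ} (hf : f ∈ F) {p : Delta F} {z : ℂ}
    (h : Tendsto f p.filter (𝓝 z)) : extend f p = z :=
  tendsto_nhds_unique (tendsto_extend hF hf p) h

theorem isTopologicalBasis_hatSet :
    TopologicalSpace.IsTopologicalBasis {S : Set (Delta F) | ∃ A : Set X, S = hatSet F A} := by
  have hatSet_inter (A B : Set X) : hatSet F (A ∩ B) = hatSet F A ∩ hatSet F B :=
    ext fun p => (p.filter.inter_mem_iff (s := A) (t := B))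
  refine ⟨?_, ?_, rfl⟩
  · rintro _ ⟨A, rfl⟩ _ ⟨B, rfl⟩ p hp
    exact ⟨_, ⟨A ∩ B, rfl⟩, (hatSet_inter A B) ▸ hp, (hatSet_inter A B).le⟩
  · exact sUnion_eq_univ_iff.2 fun p => ⟨_, ⟨univ, rfl⟩, p.filter.univ_mem⟩

theorem hatSet_mem_nhds {p : Delta F} {A : Set X} (hA : A ∈ p.1) : hatSet F A ∈ 𝓝 p :=
  (isTopologicalBasis_hatSet.isOpen ⟨A, rfl⟩).mem_nhds hA

theorem continuous_extend (hF : IsClosed (F : Set (BoundedContinuousFunction X ℂ)))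
    {f : BoundedContinuousFunction X ℂ} (hf : f ∈ F) : Continuous (extend (F := F) f) := by
  refine continuous_iff_continuousAt.2 fun p =>
    Metric.nhds_basis_closedBall.tendsto_right_iff.2 fun ε hε => ?_
  filter_upwards [hatSet_mem_nhds (tendsto_extend hF hf p (Metric.closedBall_mem_nhds _ hε))]
    with r hr
  exact Metric.isClosed_closedBall.mem_of_tendsto (tendsto_extend hF hf r) hr

theorem filter_eq_nhds {e : X → Delta F} (he : IsEvaluation F e) (x : X) :
    (e x).filter = @nhds X (tauF F) x :=
  Filter.ext fun A => show A ∈ (e x).1 ↔ _ by rw [he x]; rfl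

theorem extend_apply_of_isEvaluation (hF : IsClosed (F : Set (BoundedContinuousFunction X ℂ)))
    {f : BoundedContinuousFunction X ℂ} (hf : f ∈ F) {e : X → Delta F} (he : IsEvaluation F e)
    (x : X) : extend f (e x) = f x :=
  extend_eq_of_tendsto hF hf
    (filter_eq_nhds he x ▸ @Continuous.tendsto X ℂ (tauF F) _ _ (continuous_tauF hf) x)

theorem denseRange_of_isEvaluation {e : X → Delta F} (he : IsEvaluation F e) : DenseRange e := by
  refine isTopologicalBasis_hatSet.dense_iff.2 ?_
  rintro _ ⟨A, rfl⟩ ⟨p, hp⟩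
  obtain ⟨x, hx⟩ := p.2.1.1.nonempty_of_mem (p.2.1.interior_mem hp)
  refine ⟨e x, show A ∈ (e x).1 from ?_, mem_range_self x⟩
  rw [he x]
  exact @mem_interior_iff_mem_nhds X (tauF F) _ _ |>.1 hx

theorem mem_of_tendsto_zero {f : BoundedContinuousFunction X ℂ} {p : Delta F} {A : Set X}
    (h : Tendsto f p.filter (𝓝 0)) (h_one : ∀ x ∉ A, f x = 1) : A ∈ p.1 :=
  p.filter.mem_of_superset (h (Metric.ball_mem_nhds 0 one_pos)) fun x hx =>
    by_contra fun hxA => by simp [h_one x hxA] at hx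

theorem eq_of_forall_extend_eq (hF : IsClosed (F : Set (BoundedContinuousFunction X ℂ)))
    {p q : Delta F} (h : ∀ f ∈ F, extend f p = extend f q) : p = q := by
  refine Subtype.ext (q.2.2 p.1 p.2.1 fun A hA => ?_)
  obtain ⟨B, hB, f, hf, h_zero, h_one⟩ := q.2.1.isFRegular A hA
  have hq : extend f q = 0 :=
    extend_eq_of_tendsto hF hf (tendsto_const_nhds.congr' (eventuallyEq_of_mem hB h_zero).symm)
  have hp : Tendsto f p.filter (𝓝 0) := by
    simpa [h f hf, hq] using tendsto_extend hF hf p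
  exact mem_of_tendsto_zero hp h_one

theorem subset_of_continuous_of_comp_eq {F₁ F₂ : StarSubalgebra ℂ (BoundedContinuousFunction X ℂ)}
    {e₁ : X → Delta F₁} {e₂ : X → Delta F₂} (he₁ : IsEvaluation F₁ e₁)
    (he₂ : IsEvaluation F₂ e₂) {G : Delta F₂ → Delta F₁} (hG : Continuous G) (hGe : e₁ = G ∘ e₂)
    (p : Delta F₂) : (G p).1 ⊆ p.1 := by
  -- a basic neighbourhood `Ĉ` of `p` is mapped into `Â`, which forces `interior C ⊆ A`
  intro A hA
  obtain ⟨_, ⟨C, rfl⟩, hpC, hCA⟩ :=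
    isTopologicalBasis_hatSet.mem_nhds_iff.1 (hG.continuousAt (hatSet_mem_nhds hA))
  refine p.filter.mem_of_superset (p.2.1.interior_mem hpC) fun x hx => ?_
  have hx₂ : e₂ x ∈ hatSet F₂ C := show C ∈ (e₂ x).1 by
    rw [he₂ x]; exact @mem_interior_iff_mem_nhds X (tauF F₂) _ _ |>.1 hx
  have hx₁ : A ∈ (e₁ x).1 := by rw [hGe]; exact hCA hx₂
  rw [he₁ x] at hx₁
  exact @mem_of_mem_nhds X (tauF F₁) _ _ hx₁

end Delta

end

open Delta

theorem stmt17_general (F₁ F₂ : StarSubalgebra ℂ (BoundedContinuousFunction X ℂ))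
    (hF₁ : IsClosed (F₁ : Set (BoundedContinuousFunction X ℂ)))
    (e₁ : X → Delta F₁) (he₁ : ∀ x : X, (e₁ x).1 = {A : Set X | A ∈ @nhds X (tauF F₁) x})
    (e₂ : X → Delta F₂) (he₂ : ∀ x : X, (e₂ x).1 = {A : Set X | A ∈ @nhds X (tauF F₂) x})
    (G : Delta F₂ → Delta F₁) (hGc : Continuous G)
    (hGe : e₁ = G ∘ e₂) (p : Delta F₂) (q : Delta F₁) :
    List.TFAE
      [q.1 ⊆ p.1,
       G p = q,
       ∀ f ∈ F₁, ∀ (g₁ : C(Delta F₁, ℂ)) (g₂ : C(Delta F₂, ℂ)),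
         (∀ x : X, f x = g₁ (e₁ x)) → (∀ x : X, f x = g₂ (e₂ x)) →
         g₂ p = g₁ q] := by
  have hGp : (G p).1 ⊆ p.1 := subset_of_continuous_of_comp_eq he₁ he₂ hGc hGe p
  have hGe' (x : X) : G (e₂ x) = e₁ x := by rw [hGe]; rfl
  tfae_have 1 → 2 := fun hqp =>
    Subtype.ext ((G p).2.eq_of_subset_isSetFilter q.2 p.2.1.1 hGp hqp)
  tfae_have 2 → 1 := fun hGq => hGq ▸ hGp
  tfae_have 2 → 3 := by
    rintro rfl f - g₁ g₂ hg₁ hg₂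
    have hg : ⇑g₂ = g₁ ∘ G := (denseRange_of_isEvaluation he₂).equalizer g₂.continuous
      (g₁.continuous.comp hGc) (funext fun x => by simp [← hg₂, hg₁, hGe'])
    exact congrFun hg p
  tfae_have 3 → 2 := fun h => eq_of_forall_extend_eq hF₁ fun f hf =>
    h f hf ⟨extend f, continuous_extend hF₁ hf⟩ ⟨extend f ∘ G, (continuous_extend hF₁ hf).comp hGc⟩
      (fun x => (extend_apply_of_isEvaluation hF₁ hf he₁ x).symm)
      (fun x => by simp [hGe', extend_apply_of_isEvaluation hF₁ hf he₁ x])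
  tfae_finish

theorem stmt17 (F₁ F₂ : StarSubalgebra ℂ (BoundedContinuousFunction X ℂ))
    (hF₁ : IsClosed (F₁ : Set (BoundedContinuousFunction X ℂ))) (hF₂ : IsClosed (F₂ : Set (BoundedContinuousFunction X ℂ)))
    (hle : (F₁ : Set (BoundedContinuousFunction X ℂ)) ⊆ (F₂ : Set (BoundedContinuousFunction X ℂ)))
    (e₁ : X → Delta F₁) (he₁ : ∀ x : X, (e₁ x).1 = {A : Set X | A ∈ @nhds X (tauF F₁) x})
    (e₂ : X → Delta F₂) (he₂ : ∀ x : X, (e₂ x).1 = {A : Set X | A ∈ @nhds X (tauF F₂) x})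
    (G : Delta F₂ → Delta F₁) (hGc : Continuous G) (hGs : Function.Surjective G)
    (hGe : e₁ = G ∘ e₂) (p : Delta F₂) (q : Delta F₁) :
    List.TFAE
      [q.1 ⊆ p.1,
       G p = q,
       ∀ f ∈ F₁, ∀ (g₁ : C(Delta F₁, ℂ)) (g₂ : C(Delta F₂, ℂ)),
         (∀ x : X, f x = g₁ (e₁ x)) → (∀ x : X, f x = g₂ (e₂ x)) →
         g₂ p = g₁ q] :=
  stmt17_general F₁ F₂ hF₁ e₁ he₁ e₂ he₂ G hGc hGe p q
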